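/- arXiv:2604.14412 — 2 statements merged into one kernel-verified Lean document; each statement's English description precedes it below -/
import Mathlib

section
/- There is a universal constant C > 0 with the following property. Let M ≥ 0 and let g : ℝ → ℂ be measurable with |g(y)| ≤ M for almost every y ∈ [0,1]. Define F : ℝ → ℂ by F(k) = ∫₀¹ g(y)/(y − i(1 − k)) dy. Then F ∈ L²(ℝ) and ‖F‖_{L²(ℝ)} ≤ C · M. -/
open MeasureTheory
open Set

noncomputable def phi8 (t : ℝ) : ℝ := 4 * min (|t| ^ (-(4⁻¹:ℝ))) |t|⁻¹

lemma phi8_nonneg (t : ℝ) : 0 ≤ phi8 t := by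
  have h1 : (0:ℝ) ≤ |t| ^ (-(4⁻¹:ℝ)) := Real.rpow_nonneg (abs_nonneg t) _
  have h2 : (0:ℝ) ≤ |t|⁻¹ := by positivity
  exact mul_nonneg (by norm_num) (le_min h1 h2)

lemma phi8_meas : Measurable phi8 := by
  unfold phi8; fun_prop


lemma aux_compl : (Icc (-1:ℝ) 1)ᶜ = Iio (-1:ℝ) ∪ Ioi 1 := by
  ext x; simp [not_and_or, not_le, imp_iff_not_or]

lemma aux1 : IntegrableOn (fun t : ℝ => 16 * |t| ^ (-(2⁻¹:ℝ))) (Icc (-1:ℝ) 1) volume := by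
  have hpos : IntegrableOn (fun t : ℝ => 16 * |t| ^ (-(2⁻¹:ℝ))) (Icc (0:ℝ) 1) volume := by
    have base : IntegrableOn (fun t : ℝ => t ^ (-(2⁻¹:ℝ))) (Ioc (0:ℝ) 1) volume :=
      (intervalIntegral.intervalIntegrable_rpow' (by norm_num)).1
    have h2 : IntegrableOn (fun t : ℝ => 16 * t ^ (-(2⁻¹:ℝ))) (Icc (0:ℝ) 1) volume :=
      ((integrableOn_Icc_iff_integrableOn_Ioc).mpr base).const_mul 16
    exact IntegrableOn.congr_fun h2
      (fun t ht => by rw [abs_of_nonneg ht.1]) measurableSet_Icc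
  have hneg : IntegrableOn (fun t : ℝ => 16 * |t| ^ (-(2⁻¹:ℝ))) (Icc (-1:ℝ) 0) volume := by
    rw [← (Measure.measurePreserving_neg (volume : Measure ℝ)).integrableOn_comp_preimage
      (Homeomorph.neg ℝ).measurableEmbedding]
    have hs : (Neg.neg ⁻¹' Icc (-1:ℝ) 0) = Icc (0:ℝ) 1 := by
      ext x
      simp only [mem_preimage, mem_Icc, mem_preimage]
      constructor <;> intro h <;> constructor <;> linarith [h.1, h.2]
    rw [hs]
    exact IntegrableOn.congr_fun hpos (fun t ht => by simp [Function.comp]) measurableSet_Icc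
  have := hneg.union hpos
  rwa [Set.Icc_union_Icc_eq_Icc (by norm_num) (by norm_num)] at this

lemma aux2 : IntegrableOn (fun t : ℝ => 16 * (t⁻¹)^2) (Icc (-1:ℝ) 1)ᶜ volume := by
  have hpos : IntegrableOn (fun t : ℝ => 16 * (t⁻¹)^2) (Ioi (1:ℝ)) volume := by
    have base : IntegrableOn (fun t : ℝ => 16 * t ^ (-2:ℝ)) (Ioi (1:ℝ)) volume :=
      (integrableOn_Ioi_rpow_of_lt (by norm_num) one_pos).const_mul 16
    refine IntegrableOn.congr_fun base (fun t (ht : 1 < t) => ?_) measurableSet_Ioi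
    rw [show (-2:ℝ) = ((-2 : ℤ) : ℝ) by norm_num, Real.rpow_intCast]
    rw [zpow_neg, ← inv_zpow, show (2:ℤ) = ((2:ℕ):ℤ) by norm_num, zpow_natCast]
  have hneg : IntegrableOn (fun t : ℝ => 16 * (t⁻¹)^2) (Iio (-1:ℝ)) volume := by
    rw [← (Measure.measurePreserving_neg (volume : Measure ℝ)).integrableOn_comp_preimage
      (Homeomorph.neg ℝ).measurableEmbedding]
    have hs : (Neg.neg ⁻¹' Iio (-1:ℝ)) = Ioi (1:ℝ) := by ext x; simp [lt_neg]
    rw [hs]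
    exact IntegrableOn.congr_fun hpos (fun t ht => by simp [Function.comp]) measurableSet_Ioi
  rw [aux_compl]
  exact hneg.union hpos



lemma phi8_sq_int : Integrable (fun t => phi8 t ^ 2) volume := by
  have hψ : Integrable ((Icc (-1:ℝ) 1).indicator (fun t : ℝ => 16 * |t| ^ (-(2⁻¹:ℝ)))
      + (Icc (-1:ℝ) 1)ᶜ.indicator (fun t : ℝ => 16 * (t⁻¹)^2)) volume :=
    (aux1.integrable_indicator measurableSet_Icc).add
      (aux2.integrable_indicator measurableSet_Icc.compl)
  refine hψ.mono' ((phi8_meas.pow_const 2).aestronglyMeasurable)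
    (Filter.Eventually.of_forall fun t => ?_)
  rw [Real.norm_eq_abs, abs_of_nonneg (by positivity)]
  by_cases ht : t ∈ Icc (-1:ℝ) 1
  · have ht1 : |t| ≤ 1 := abs_le.mpr ⟨ht.1, ht.2⟩
    have hmin : min (|t| ^ (-(4⁻¹:ℝ))) |t|⁻¹ ≤ |t| ^ (-(4⁻¹:ℝ)) := min_le_left _ _
    have hnn : 0 ≤ min (|t| ^ (-(4⁻¹:ℝ))) |t|⁻¹ :=
      le_min (Real.rpow_nonneg (abs_nonneg t) _) (by positivity)
    have hsq : (|t| ^ (-(4⁻¹:ℝ)))^2 = |t| ^ (-(2⁻¹:ℝ)) := by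
      rw [← Real.rpow_natCast (|t| ^ (-(4⁻¹:ℝ))) 2, ← Real.rpow_mul (abs_nonneg t)]
      norm_num
    have : phi8 t ^ 2 ≤ 16 * |t| ^ (-(2⁻¹:ℝ)) := by
      unfold phi8
      rw [mul_pow, ← hsq]
      nlinarith [pow_le_pow_left₀ hnn hmin 2]
    calc phi8 t ^ 2 ≤ 16 * |t| ^ (-(2⁻¹:ℝ)) := this
      _ ≤ _ := by
        simp only [Pi.add_apply, Set.indicator_of_mem ht]
        have : (0:ℝ) ≤ (Icc (-1:ℝ) 1)ᶜ.indicator (fun t : ℝ => 16 * (t⁻¹)^2) t :=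
          Set.indicator_nonneg (fun x _ => by positivity) t
        linarith
  · have hmin : min (|t| ^ (-(4⁻¹:ℝ))) |t|⁻¹ ≤ |t|⁻¹ := min_le_right _ _
    have hnn : 0 ≤ min (|t| ^ (-(4⁻¹:ℝ))) |t|⁻¹ :=
      le_min (Real.rpow_nonneg (abs_nonneg t) _) (by positivity)
    have hsq : (|t|⁻¹)^2 = (t⁻¹)^2 := by rw [← abs_inv, sq_abs]
    have : phi8 t ^ 2 ≤ 16 * (t⁻¹)^2 := by
      unfold phi8
      rw [mul_pow, ← hsq]
      nlinarith [pow_le_pow_left₀ hnn hmin 2]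
    calc phi8 t ^ 2 ≤ 16 * (t⁻¹)^2 := this
      _ ≤ _ := by
        simp only [Pi.add_apply, Set.indicator_of_notMem ht, Set.indicator_of_mem (Set.mem_compl ht)]
        simp

lemma phi8_memLp : MemLp phi8 2 (volume : Measure ℝ) :=
  (memLp_two_iff_integrable_sq phi8_meas.aestronglyMeasurable).mpr phi8_sq_int


-- the square root formula and lower bounds
lemma habs (y t : ℝ) : ‖(y:ℂ) - Complex.I * (t:ℂ)‖ = Real.sqrt (y^2 + t^2) := by
  rw [Complex.norm_def, Complex.normSq_apply]
  simp
  ring_nf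

lemma hlow1 (y t : ℝ) : |t| ≤ ‖(y:ℂ) - Complex.I * (t:ℂ)‖ := by
  have := Complex.abs_im_le_norm ((y:ℂ) - Complex.I * (t:ℂ))
  simpa using this

lemma hlow2 {y t : ℝ} (hy : 0 < y) (ht : t ≠ 0) :
    y ^ ((3:ℝ)/4) * |t| ^ ((4:ℝ)⁻¹) ≤ ‖(y:ℂ) - Complex.I * (t:ℂ)‖ := by
  rw [habs]
  have ht' : 0 < |t| := abs_pos.mpr ht
  rw [show y ^ ((3:ℝ)/4) * |t| ^ ((4:ℝ)⁻¹)
      = Real.sqrt ((y ^ ((3:ℝ)/4) * |t| ^ ((4:ℝ)⁻¹))^2) from (Real.sqrt_sq (by positivity)).symm]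
  apply Real.sqrt_le_sqrt
  have hsq : (y ^ ((3:ℝ)/4) * |t| ^ ((4:ℝ)⁻¹)) ^ 2 = y ^ ((3:ℝ)/2) * |t| ^ ((2:ℝ)⁻¹) := by
    rw [mul_pow, ← Real.rpow_natCast (y ^ _) 2, ← Real.rpow_natCast (|t| ^ _) 2,
      ← Real.rpow_mul hy.le, ← Real.rpow_mul ht'.le]
    norm_num
  rw [hsq]
  rcases le_total y |t| with h | h
  · have h1 : y ^ ((3:ℝ)/2) ≤ |t| ^ ((3:ℝ)/2) := Real.rpow_le_rpow hy.le h (by norm_num)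
    have h2 : |t| ^ ((3:ℝ)/2) * |t| ^ ((2:ℝ)⁻¹) = t^2 := by
      rw [← Real.rpow_add ht', show (3:ℝ)/2 + 2⁻¹ = ((2:ℕ):ℝ) by norm_num,
        Real.rpow_natCast, sq_abs]
    nlinarith [Real.rpow_nonneg (abs_nonneg t) ((2:ℝ)⁻¹), sq_nonneg y]
  · have h1 : |t| ^ ((2:ℝ)⁻¹) ≤ y ^ ((2:ℝ)⁻¹) := Real.rpow_le_rpow (abs_nonneg t) h (by norm_num)
    have h2 : y ^ ((3:ℝ)/2) * y ^ ((2:ℝ)⁻¹) = y^2 := by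
      rw [← Real.rpow_add hy, ← Real.rpow_natCast y 2]
      norm_num
    nlinarith [Real.rpow_nonneg hy.le ((3:ℝ)/2), sq_nonneg t]

lemma hI34 : ∫ y in Icc (0:ℝ) 1, y ^ (-((3:ℝ)/4)) = 4 := by
  rw [integral_Icc_eq_integral_Ioc, ← intervalIntegral.integral_of_le (zero_le_one),
    integral_rpow (Or.inl (by norm_num))]
  rw [Real.one_rpow, Real.zero_rpow (by norm_num)]
  norm_num

lemma key_bound (M : ℝ) (hM : 0 ≤ M) (g : ℝ → ℂ)
    (hb : ∀ᵐ y ∂(volume.restrict (Set.Icc (0:ℝ) 1)), ‖g y‖ ≤ M)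
    {k : ℝ} (hk : k ≠ 1) :
    ‖∫ y in Set.Icc (0:ℝ) 1, g y / (y - Complex.I * ((1:ℝ) - k))‖ ≤ M * phi8 (1 - k) := by
  set t := (1:ℝ) - k with htdef
  have ht : t ≠ 0 := sub_ne_zero.mpr (Ne.symm hk)
  have ht' : 0 < |t| := abs_pos.mpr ht
  have hae0 : ∀ᵐ y ∂(volume.restrict (Set.Icc (0:ℝ) 1)), y ≠ (0:ℝ) := by
    apply ae_restrict_of_ae
    rw [ae_iff]
    simp only [not_not, Set.setOf_eq_eq_singleton]
    exact measure_singleton 0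
  -- bound (i)
  have hint : Integrable (fun y : ℝ => (M * |t| ^ (-(4⁻¹:ℝ))) * y ^ (-((3:ℝ)/4)))
      (volume.restrict (Set.Icc (0:ℝ) 1)) := by
    have base : IntegrableOn (fun y : ℝ => y ^ (-((3:ℝ)/4))) (Set.Icc (0:ℝ) 1) volume :=
      (integrableOn_Icc_iff_integrableOn_Ioc).mpr
        (intervalIntegral.intervalIntegrable_rpow' (by norm_num)).1
    exact base.const_mul _
  have hptw : ∀ᵐ y ∂(volume.restrict (Set.Icc (0:ℝ) 1)),
      ‖g y / ((y:ℂ) - Complex.I * (t:ℝ))‖ ≤ (M * |t| ^ (-(4⁻¹:ℝ))) * y ^ (-((3:ℝ)/4)) := by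
    filter_upwards [hb, hae0, ae_restrict_mem measurableSet_Icc] with y hby hy0 hymem
    have hy : 0 < y := lt_of_le_of_ne hymem.1 (Ne.symm hy0)
    have hd := hlow2 hy ht
    rw [norm_div]
    calc ‖g y‖ / ‖((y:ℂ) - Complex.I * (t:ℝ))‖
        ≤ M / (y ^ ((3:ℝ)/4) * |t| ^ ((4:ℝ)⁻¹)) := by
          apply div_le_div₀ hM _ (by positivity) _
          · exact hby
          · exact hd
      _ = (M * |t| ^ (-(4⁻¹:ℝ))) * y ^ (-((3:ℝ)/4)) := by
          rw [Real.rpow_neg (abs_nonneg t), Real.rpow_neg hy.le, div_eq_mul_inv, mul_inv]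
          ring
  have h1 := norm_integral_le_of_norm_le hint hptw
  rw [integral_const_mul, hI34] at h1
  -- bound (ii)
  have hptw2 : ∀ᵐ y ∂(volume.restrict (Set.Icc (0:ℝ) 1)),
      ‖g y / ((y:ℂ) - Complex.I * (t:ℝ))‖ ≤ M * |t|⁻¹ := by
    filter_upwards [hb] with y hby
    rw [norm_div]
    calc ‖g y‖ / ‖((y:ℂ) - Complex.I * (t:ℝ))‖ ≤ M / |t| := by
          apply div_le_div₀ hM _ ht' _
          · exact hby
          · exact hlow1 y t
      _ = M * |t|⁻¹ := div_eq_mul_inv M |t|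
  have h2 := norm_integral_le_of_norm_le (integrable_const (M * |t|⁻¹)) hptw2
  rw [integral_const] at h2
  simp only [measureReal_restrict_apply_univ, Real.volume_real_Icc, sub_zero, max_eq_left
    (zero_le_one' ℝ), one_smul] at h2
  -- combine
  have hb0 : (0:ℝ) ≤ |t|⁻¹ := by positivity
  have hcast : ((1:ℝ):ℂ) - (k:ℂ) = ((t:ℝ):ℂ) := by rw [htdef]; push_cast; ring
  simp only [hcast]
  rcases le_total (|t| ^ (-(4⁻¹:ℝ))) (|t|⁻¹) with hc | hc
  · rw [phi8, min_eq_left hc]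
    nlinarith [h1]
  · rw [phi8, min_eq_right hc]
    nlinarith [h2, mul_nonneg hM hb0]

/-- There is a universal constant `C > 0` such that for any `M ≥ 0` and measurable
`g` with `|g| ≤ M` a.e. on `[0,1]`, the function
`F(k) = ∫₀¹ g(y)/(y − i(1 − k)) dy` belongs to `L²(ℝ)` with `‖F‖_{L²} ≤ C·M`. -/
theorem stmt8 :
    ∃ C : ℝ, 0 < C ∧
      ∀ (M : ℝ), 0 ≤ M → ∀ g : ℝ → ℂ, Measurable g →
        (∀ᵐ y ∂(volume.restrict (Set.Icc (0 : ℝ) 1)), ‖g y‖ ≤ M) →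
        MemLp (fun k : ℝ => ∫ y in Set.Icc (0 : ℝ) 1,
            g y / (y - Complex.I * ((1 : ℝ) - k))) 2 (volume : Measure ℝ) ∧
        eLpNorm (fun k : ℝ => ∫ y in Set.Icc (0 : ℝ) 1,
            g y / (y - Complex.I * ((1 : ℝ) - k))) 2 (volume : Measure ℝ) ≤
          ENNReal.ofReal (C * M) := by
  refine ⟨(eLpNorm phi8 2 volume).toReal + 1, by positivity, ?_⟩
  intro M hM g hg hb
  have hFmeas : AEStronglyMeasurable (fun k : ℝ => ∫ y in Set.Icc (0:ℝ) 1,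
      g y / (y - Complex.I * ((1:ℝ) - k))) volume := by
    have hH : StronglyMeasurable
        (fun p : ℝ × ℝ => g p.2 / ((p.2 : ℂ) - Complex.I * ((1:ℝ) - (p.1:ℂ)))) :=
      (by fun_prop : Measurable _).stronglyMeasurable
    exact (hH.integral_prod_right').aestronglyMeasurable
  have hae : ∀ᵐ k : ℝ ∂(volume : Measure ℝ),
      ‖∫ y in Set.Icc (0:ℝ) 1, g y / (y - Complex.I * ((1:ℝ) - k))‖
        ≤ ‖M * phi8 (1 - k)‖ := by
    have h1 : ∀ᵐ k : ℝ ∂(volume : Measure ℝ), k ≠ 1 := by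
      rw [ae_iff]; simp only [not_not, Set.setOf_eq_eq_singleton]; exact measure_singleton 1
    filter_upwards [h1] with k hk
    rw [Real.norm_eq_abs, abs_of_nonneg (mul_nonneg hM (phi8_nonneg _))]
    exact key_bound M hM g hb hk
  have hcomp : eLpNorm (fun k : ℝ => M * phi8 (1 - k)) 2 volume
      = ENNReal.ofReal M * eLpNorm phi8 2 volume := by
    have e1 : (fun k : ℝ => M * phi8 (1 - k)) = M • (phi8 ∘ fun k : ℝ => (1:ℝ) - k) := rfl
    rw [e1, eLpNorm_const_smul,
      eLpNorm_comp_measurePreserving phi8_meas.aestronglyMeasurable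
        (Measure.measurePreserving_sub_left volume 1),
      Real.enorm_eq_ofReal hM]
  have hle : eLpNorm (fun k : ℝ => ∫ y in Set.Icc (0:ℝ) 1,
      g y / (y - Complex.I * ((1:ℝ) - k))) 2 volume
      ≤ ENNReal.ofReal M * eLpNorm phi8 2 volume := by
    rw [← hcomp]; exact eLpNorm_mono_ae hae
  have hphi_fin : eLpNorm phi8 2 volume < ⊤ := phi8_memLp.2
  constructor
  · exact ⟨hFmeas, lt_of_le_of_lt hle (ENNReal.mul_lt_top ENNReal.ofReal_lt_top hphi_fin)⟩
  · refine hle.trans ?_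
    have h2 : eLpNorm phi8 2 volume
        ≤ ENNReal.ofReal ((eLpNorm phi8 2 volume).toReal + 1) := by
      conv_lhs => rw [← ENNReal.ofReal_toReal hphi_fin.ne]
      exact ENNReal.ofReal_le_ofReal (by linarith)
    calc ENNReal.ofReal M * eLpNorm phi8 2 volume
        ≤ ENNReal.ofReal M * ENNReal.ofReal ((eLpNorm phi8 2 volume).toReal + 1) :=
          mul_le_mul_right h2 _
      _ = ENNReal.ofReal (((eLpNorm phi8 2 volume).toReal + 1) * M) := by
          rw [← ENNReal.ofReal_mul hM, mul_comm]
end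

section
/- There is a universal constant C > 0 with the following property. Let M ≥ 0 and let f₁ : ℝ → ℂ be measurable with |f₁(s)| ≤ M for almost every s ∈ [−1,1], and f₂, f₃ : ℝ → ℂ measurable with |f₂(y)| ≤ M and |f₃(y)| ≤ M for almost every y ∈ [0,1]. Define F : ℝ → ℂ by F(k) = i ∫₀¹ f₂(y)/((−1 + i y) − k) dy + ∫_{−1}^{1} f₁(s)/((s + i) − k) ds − i ∫₀¹ f₃(y)/((1 + i y) − k) dy. Then F ∈ L²(ℝ) and ‖F‖_{L²(ℝ)} ≤ C · M. (This is the L² part of the Cauchy-transform estimate over the rectangular contour S₁ = [−1, −1+i, 1+i, 1], parametrized by its three sides.) -/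
open MeasureTheory

/-! Auxiliary definitions and lemmas -/

noncomputable def vfun (x : ℝ) : ℝ := |x| ^ (-((1:ℝ)/4)) * (1 + |x|) ^ (-((3:ℝ)/4))

lemma vfun_nonneg (x : ℝ) : 0 ≤ vfun x := by unfold vfun; positivity

lemma poly_ineq {a y : ℝ} (ha : 0 ≤ a) (hy0 : 0 < y) (hy1 : y ≤ 1) :
    a * (1+a)^3 * y^3 ≤ 16 * (a^2 + y^2)^2 := by
  have hy3 : 0 < y^3 := by positivity
  rcases le_total a 1 with h | h
  · have ha2 : a^2 ≤ 1 := by nlinarith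
    have ha3 : a^3 ≤ 1 := by nlinarith [mul_nonneg ha ha]
    have h8 : (1+a)^3 ≤ 8 := by nlinarith
    have hAM : 2*a*y ≤ a^2+y^2 := by nlinarith [sq_nonneg (a-y)]
    have hy2 : y^2 ≤ a^2+y^2 := by nlinarith
    have k1 : (2*a*y)*y^2 ≤ (a^2+y^2)*(a^2+y^2) :=
      mul_le_mul hAM hy2 (sq_nonneg y) (by positivity)
    have k2 : a*(1+a)^3*y^3 ≤ 8*(a*y^3) := by nlinarith [mul_nonneg ha hy3.le]
    nlinarith [mul_nonneg ha hy3.le]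
  · have p1 : a ≤ a^3 := by
      nlinarith [mul_nonneg (mul_nonneg ha ha) ha, sq_nonneg (a-1), sq_nonneg (a+1)]
    have p2 : a^2 ≤ a^3 := by nlinarith [mul_nonneg ha ha]
    have p3 : (1:ℝ) ≤ a^3 := by nlinarith
    have h8 : (1+a)^3 ≤ 8*a^3 := by nlinarith
    have hy3' : y^3 ≤ 1 := pow_le_one₀ hy0.le hy1
    have k2 : a*(1+a)^3*y^3 ≤ 8*a^4 := by
      nlinarith [mul_nonneg ha hy3.le, pow_nonneg ha 4,
        mul_nonneg (mul_nonneg ha ha) (mul_nonneg ha ha)]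
    have k3 : a^4 ≤ (a^2+y^2)^2 := by nlinarith [sq_nonneg y, sq_nonneg a]
    nlinarith

lemma key_vert {a y : ℝ} (ha : 0 < a) (hy0 : 0 < y) (hy1 : y ≤ 1) :
    a ^ ((1:ℝ)/4) * (1+a) ^ ((3:ℝ)/4) * y ^ ((3:ℝ)/4) ≤ 2 * Real.sqrt (a^2 + y^2) := by
  have h1 : (0:ℝ) < 1 + a := by linarith
  apply le_of_pow_le_pow_left₀ (n := 4) (by norm_num) (by positivity)
  have e1 : (a ^ ((1:ℝ)/4) * (1+a) ^ ((3:ℝ)/4) * y ^ ((3:ℝ)/4))^4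
      = a * (1+a)^3 * y^3 := by
    rw [mul_pow, mul_pow, ← Real.rpow_natCast (a ^ _) 4, ← Real.rpow_natCast ((1+a) ^ _) 4,
      ← Real.rpow_natCast (y ^ _) 4, ← Real.rpow_mul ha.le, ← Real.rpow_mul h1.le,
      ← Real.rpow_mul hy0.le]
    rw [show ((1:ℝ)/4) * ((4:ℕ):ℝ) = 1 by norm_num, show ((3:ℝ)/4) * ((4:ℕ):ℝ) = ((3:ℕ):ℝ) by norm_num,
      Real.rpow_one, Real.rpow_natCast, Real.rpow_natCast]
  have e2 : (2 * Real.sqrt (a^2 + y^2))^4 = 16 * (a^2 + y^2)^2 := by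
    have h4 : Real.sqrt (a^2+y^2) ^ 4 = ((Real.sqrt (a^2+y^2))^2)^2 := by ring
    rw [mul_pow, h4, Real.sq_sqrt (by positivity)]
    norm_num
  rw [e1, e2]
  exact poly_ineq ha.le hy0 hy1

lemma abs_complex_aux (c k y : ℝ) :
    ‖((c : ℂ) + Complex.I * y - k)‖ = Real.sqrt ((k - c)^2 + y^2) := by
  rw [Complex.norm_def, Complex.normSq_apply]
  simp
  congr 1
  ring

lemma key_top {s k : ℝ} (hs : |s| ≤ 1) : 1 + |k| ≤ 4 * Real.sqrt ((s-k)^2 + 1) := by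
  have hs2 : s^2 ≤ 1 := by nlinarith [sq_abs s, abs_nonneg s]
  have hsq : (1 + |k|)^2 ≤ 16 * ((s-k)^2 + 1) := by
    rcases le_total |k| 3 with h | h
    · nlinarith [sq_nonneg (s-k), abs_nonneg k]
    · have hsk : s*k ≤ |k| := by
        calc s*k ≤ |s*k| := le_abs_self _
        _ = |s| * |k| := abs_mul s k
        _ ≤ 1 * |k| := by gcongr
        _ = |k| := one_mul _
      nlinarith [sq_abs k]
  calc 1 + |k| = Real.sqrt ((1+|k|)^2) := (Real.sqrt_sq (by positivity)).symm
    _ ≤ Real.sqrt (16 * ((s-k)^2 + 1)) := Real.sqrt_le_sqrt hsq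
    _ = 4 * Real.sqrt ((s-k)^2 + 1) := by
        rw [show (16:ℝ) * ((s-k)^2+1) = 4^2 * ((s-k)^2+1) by norm_num,
          Real.sqrt_mul (by positivity), Real.sqrt_sq (by norm_num)]

lemma vert_bound {M : ℝ} (hM : 0 ≤ M) {f : ℝ → ℂ}
    (hbd : ∀ᵐ y ∂(volume.restrict (Set.Icc (0:ℝ) 1)), ‖f y‖ ≤ M)
    (c k : ℝ) (hk : k ≠ c) :
    ‖∫ y in Set.Icc (0:ℝ) 1, f y / ((c + Complex.I * y) - k)‖ ≤ M * (8 * vfun (k - c)) := by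
  set a := |k - c| with ha
  have ha0 : 0 < a := abs_pos.2 (sub_ne_zero.2 hk)
  have h1a : (0:ℝ) < 1 + a := by linarith
  set D : ℝ := a ^ (-((1:ℝ)/4)) * (1+a) ^ (-((3:ℝ)/4)) with hD
  have hDpos : 0 < D := by rw [hD]; positivity
  have hvf : vfun (k - c) = D := by rw [hD, vfun, ← ha]
  set g : ℝ → ℝ := fun y => (2 * M * D) * y ^ (-((3:ℝ)/4)) with hg
  have hrint : IntegrableOn (fun y : ℝ => y ^ (-((3:ℝ)/4))) (Set.Ioc (0:ℝ) 1) volume := by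
    have := intervalIntegral.intervalIntegrable_rpow' (a := 0) (b := 1)
      (r := -((3:ℝ)/4)) (by norm_num)
    rwa [intervalIntegrable_iff_integrableOn_Ioc_of_le (by norm_num : (0:ℝ) ≤ 1)] at this
  have hgint : IntegrableOn g (Set.Icc (0:ℝ) 1) volume := by
    rw [integrableOn_Icc_iff_integrableOn_Ioc]
    exact hrint.const_mul _
  have h0 : ∀ᵐ y ∂(volume.restrict (Set.Icc (0:ℝ) 1)), y ≠ (0:ℝ) :=
    ae_restrict_of_ae (by
      refine MeasureTheory.ae_iff.2 ?_
      have hs : {a : ℝ | ¬ a ≠ 0} = {(0:ℝ)} := by ext z; simp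
      rw [hs]; exact measure_singleton _)
  have hmem : ∀ᵐ y ∂(volume.restrict (Set.Icc (0:ℝ) 1)), y ∈ Set.Icc (0:ℝ) 1 :=
    ae_restrict_mem measurableSet_Icc
  have hbound : ∀ᵐ y ∂(volume.restrict (Set.Icc (0:ℝ) 1)),
      ‖f y / ((c + Complex.I * y) - k)‖ ≤ g y := by
    filter_upwards [hbd, h0, hmem] with y hfy hy0 hmemy
    have hy0' : 0 < y := lt_of_le_of_ne hmemy.1 (Ne.symm hy0)
    have hy1 : y ≤ 1 := hmemy.2
    set X : ℝ := a ^ ((1:ℝ)/4) * (1+a) ^ ((3:ℝ)/4) * y ^ ((3:ℝ)/4) with hX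
    have key : X ≤ 2 * Real.sqrt (a^2 + y^2) := key_vert ha0 hy0' hy1
    have hXpos : 0 < X := by rw [hX]; positivity
    have habs : ‖((c : ℂ) + Complex.I * y - k)‖ = Real.sqrt (a^2 + y^2) := by
      rw [abs_complex_aux, ha, sq_abs]
    have hS : 0 < Real.sqrt (a^2 + y^2) := Real.sqrt_pos.2 (by positivity)
    have hgy : g y = 2 * M / X := by
      have e0 : g y = 2 * M * (a ^ (-((1:ℝ)/4)) * (1+a) ^ (-((3:ℝ)/4))) * y ^ (-((3:ℝ)/4)) := by
        rw [hg, hD]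
      have ea : (0:ℝ) < a ^ ((1:ℝ)/4) := Real.rpow_pos_of_pos ha0 _
      have eb : (0:ℝ) < (1+a) ^ ((3:ℝ)/4) := Real.rpow_pos_of_pos h1a _
      have ec : (0:ℝ) < y ^ ((3:ℝ)/4) := Real.rpow_pos_of_pos hy0' _
      rw [e0, hX, Real.rpow_neg ha0.le, Real.rpow_neg h1a.le, Real.rpow_neg hy0'.le]
      field_simp
    rw [norm_div, habs, hgy]
    calc ‖f y‖ / Real.sqrt (a^2 + y^2)
        ≤ M / Real.sqrt (a^2 + y^2) := by gcongr
      _ ≤ 2 * M / X := by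
          rw [div_le_div_iff₀ hS hXpos]
          nlinarith [mul_le_mul_of_nonneg_left key hM]
  calc ‖∫ y in Set.Icc (0:ℝ) 1, f y / ((c + Complex.I * y) - k)‖
      ≤ ∫ y in Set.Icc (0:ℝ) 1, g y := norm_integral_le_of_norm_le hgint hbound
    _ = (2 * M * D) * ∫ y in Set.Icc (0:ℝ) 1, y ^ (-((3:ℝ)/4)) := integral_const_mul _ _
    _ = (2 * M * D) * 4 := by
        rw [MeasureTheory.integral_Icc_eq_integral_Ioc,
          ← intervalIntegral.integral_of_le (by norm_num : (0:ℝ) ≤ 1),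
          integral_rpow (Or.inl (by norm_num))]
        norm_num
    _ = M * (8 * vfun (k - c)) := by rw [hvf]; ring

lemma top_bound {M : ℝ} (hM : 0 ≤ M) {f : ℝ → ℂ}
    (hbd : ∀ᵐ s ∂(volume.restrict (Set.Icc (-1:ℝ) 1)), ‖f s‖ ≤ M)
    (k : ℝ) :
    ‖∫ s in Set.Icc (-1:ℝ) 1, f s / ((s + Complex.I) - k)‖ ≤ M * (8 * (1+|k|)⁻¹) := by
  have h1k : (0:ℝ) < 1 + |k| := by positivity
  set g : ℝ → ℝ := fun _ => 4 * M / (1 + |k|) with hg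
  have hgint : IntegrableOn g (Set.Icc (-1:ℝ) 1) volume :=
    integrableOn_const (by rw [Real.volume_Icc]; exact ENNReal.ofReal_ne_top)
  have hmem : ∀ᵐ s ∂(volume.restrict (Set.Icc (-1:ℝ) 1)), s ∈ Set.Icc (-1:ℝ) 1 :=
    ae_restrict_mem measurableSet_Icc
  have hbound : ∀ᵐ s ∂(volume.restrict (Set.Icc (-1:ℝ) 1)),
      ‖f s / ((s + Complex.I) - k)‖ ≤ g s := by
    filter_upwards [hbd, hmem] with s hfs hmems
    have hs1 : |s| ≤ 1 := abs_le.2 ⟨hmems.1, hmems.2⟩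
    have habs : ‖((s : ℂ) + Complex.I - k)‖ = Real.sqrt ((s-k)^2 + 1) := by
      have := abs_complex_aux s k 1
      simp only [Complex.ofReal_one, mul_one] at this
      rw [this]
      congr 1
      ring
    have key := key_top (k := k) hs1
    have hS : 0 < Real.sqrt ((s-k)^2 + 1) := Real.sqrt_pos.2 (by positivity)
    rw [norm_div, habs, hg]
    calc ‖f s‖ / Real.sqrt ((s-k)^2 + 1)
        ≤ M / Real.sqrt ((s-k)^2 + 1) := by gcongr
      _ ≤ 4 * M / (1 + |k|) := by
          rw [div_le_div_iff₀ hS h1k]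
          nlinarith [mul_le_mul_of_nonneg_left key hM]
  calc ‖∫ s in Set.Icc (-1:ℝ) 1, f s / ((s + Complex.I) - k)‖
      ≤ ∫ s in Set.Icc (-1:ℝ) 1, g s := norm_integral_le_of_norm_le hgint hbound
    _ = (volume (Set.Icc (-1:ℝ) 1)).toReal • (4 * M / (1 + |k|)) := setIntegral_const _
    _ = M * (8 * (1+|k|)⁻¹) := by
        rw [Real.volume_Icc, show (1:ℝ) - (-1) = 2 by norm_num,
          ENNReal.toReal_ofReal (by norm_num : (0:ℝ) ≤ 2)]
        rw [smul_eq_mul, div_eq_mul_inv]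
        ring

lemma W_integrable :
    Integrable (fun x : ℝ => |x| ^ (-((1:ℝ)/2)) * (1+|x|) ^ (-((3:ℝ)/2))) volume := by
  set W : ℝ → ℝ := fun x => |x| ^ (-((1:ℝ)/2)) * (1+|x|) ^ (-((3:ℝ)/2)) with hW
  have hWm : Measurable W := by rw [hW]; fun_prop
  have hWnn : ∀ x, 0 ≤ W x := fun x => by rw [hW]; positivity
  have hIoc : IntegrableOn W (Set.Ioc (0:ℝ) 1) volume := by
    have hint : IntegrableOn (fun x : ℝ => x ^ (-((1:ℝ)/2))) (Set.Ioc (0:ℝ) 1) volume := by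
      have := intervalIntegral.intervalIntegrable_rpow' (a := 0) (b := 1)
        (r := -((1:ℝ)/2)) (by norm_num)
      rwa [intervalIntegrable_iff_integrableOn_Ioc_of_le (by norm_num : (0:ℝ) ≤ 1)] at this
    refine Integrable.mono hint hWm.aestronglyMeasurable ?_
    filter_upwards [ae_restrict_mem measurableSet_Ioc] with x hx
    have hx0 : 0 < x := hx.1
    rw [Real.norm_eq_abs, abs_of_nonneg (hWnn x), Real.norm_eq_abs,
      abs_of_nonneg (Real.rpow_nonneg hx0.le _), hW]
    simp only [abs_of_pos hx0]
    calc x ^ (-((1:ℝ)/2)) * (1+x) ^ (-((3:ℝ)/2))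
        ≤ x ^ (-((1:ℝ)/2)) * 1 := by
          gcongr
          exact Real.rpow_le_one_of_one_le_of_nonpos (by linarith) (by norm_num)
      _ = x ^ (-((1:ℝ)/2)) := mul_one _
  have hIoi : IntegrableOn W (Set.Ioi (1:ℝ)) volume := by
    have hint : IntegrableOn (fun x : ℝ => x ^ (-(2:ℝ))) (Set.Ioi (1:ℝ)) volume :=
      integrableOn_Ioi_rpow_of_lt (by norm_num) one_pos
    refine Integrable.mono hint hWm.aestronglyMeasurable ?_
    filter_upwards [ae_restrict_mem measurableSet_Ioi] with x hx
    have hx0 : (0:ℝ) < x := lt_trans one_pos hx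
    rw [Real.norm_eq_abs, abs_of_nonneg (hWnn x), Real.norm_eq_abs,
      abs_of_nonneg (Real.rpow_nonneg hx0.le _), hW]
    simp only [abs_of_pos hx0]
    have h2 : (1+x) ^ (-((3:ℝ)/2)) ≤ x ^ (-((3:ℝ)/2)) := by
      rw [Real.rpow_neg (by linarith), Real.rpow_neg hx0.le]
      apply inv_anti₀ (Real.rpow_pos_of_pos hx0 _)
      exact Real.rpow_le_rpow hx0.le (by linarith) (by norm_num)
    calc x ^ (-((1:ℝ)/2)) * (1+x) ^ (-((3:ℝ)/2))
        ≤ x ^ (-((1:ℝ)/2)) * x ^ (-((3:ℝ)/2)) := by gcongr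
      _ = x ^ (-(2:ℝ)) := by rw [← Real.rpow_add hx0]; norm_num
  have hIoi0 : IntegrableOn W (Set.Ioi (0:ℝ)) volume := by
    rw [show Set.Ioi (0:ℝ) = Set.Ioc 0 1 ∪ Set.Ioi 1 from
      (Set.Ioc_union_Ioi_eq_Ioi (by norm_num)).symm]
    exact hIoc.union hIoi
  have hWeven : ∀ x : ℝ, W (-x) = W x := fun x => by rw [hW]; simp
  have hIio : IntegrableOn W (Set.Iio (0:ℝ)) volume := by
    have heq : (Set.Iio (0:ℝ)).indicator W = fun x => (Set.Ioi (0:ℝ)).indicator W (-1 * x) := by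
      funext x
      by_cases hx : x < 0
      · rw [Set.indicator_of_mem (Set.mem_Iio.2 hx), Set.indicator_of_mem
          (Set.mem_Ioi.2 (by linarith : (0:ℝ) < -1 * x))]
        rw [show (-1 : ℝ) * x = -x by ring, hWeven]
      · rw [Set.indicator_of_notMem (by simpa using hx),
          Set.indicator_of_notMem (by simp only [Set.mem_Ioi, not_lt]; nlinarith [not_lt.1 hx])]
    refine (integrable_indicator_iff measurableSet_Iio).1 ?_
    rw [heq]
    exact (integrable_comp_mul_left_iff ((Set.Ioi (0:ℝ)).indicator W) (by norm_num : (-1:ℝ) ≠ 0)).2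
      ((integrable_indicator_iff measurableSet_Ioi).2 hIoi0)
  have hIci : IntegrableOn W (Set.Ici (0:ℝ)) volume := by
    rw [integrableOn_Ici_iff_integrableOn_Ioi]
    exact hIoi0
  have : IntegrableOn W (Set.Iio 0 ∪ Set.Ici 0) volume := hIio.union hIci
  rwa [Set.Iio_union_Ici, integrableOn_univ] at this

lemma vfun_measurable : Measurable vfun := by
  unfold vfun; fun_prop

lemma vfun_memLp2 (c : ℝ) : MemLp (fun k : ℝ => vfun (k + c)) 2 volume := by
  have hm : Measurable (fun k : ℝ => vfun (k + c)) :=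
    vfun_measurable.comp (measurable_id.add_const c)
  rw [memLp_two_iff_integrable_sq hm.aestronglyMeasurable]
  have base : Integrable (fun x : ℝ => vfun x ^ 2) volume := by
    have heq : (fun x : ℝ => vfun x ^ 2)
        = fun x => |x| ^ (-((1:ℝ)/2)) * (1+|x|) ^ (-((3:ℝ)/2)) := by
      funext x
      unfold vfun
      rw [mul_pow, ← Real.rpow_natCast (|x| ^ _) 2, ← Real.rpow_natCast ((1+|x|) ^ _) 2,
        ← Real.rpow_mul (abs_nonneg x), ← Real.rpow_mul (by positivity)]
      norm_num
    rw [heq]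
    exact W_integrable
  exact base.comp_add_right c

lemma mid_memLp : MemLp (fun k : ℝ => (1 + |k|)⁻¹) 2 volume := by
  have hm : Measurable fun k : ℝ => (1+|k|)⁻¹ := (measurable_const.add measurable_abs).inv
  rw [memLp_two_iff_integrable_sq hm.aestronglyMeasurable]
  refine Integrable.mono (g := fun x : ℝ => (1+x^2)⁻¹) ?_ (hm.pow_const 2).aestronglyMeasurable ?_
  · exact integrable_inv_one_add_sq
  · refine Filter.Eventually.of_forall fun x => ?_
    have h1 : (0:ℝ) < 1 + |x| := by positivity
    have h2 : (0:ℝ) < 1 + x^2 := by positivity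
    have e : ((1+|x|)⁻¹)^2 = ((1+|x|)^2)⁻¹ := by rw [inv_pow]
    simp only [Real.norm_eq_abs]
    rw [abs_of_nonneg (by positivity : (0:ℝ) ≤ ((1+|x|)⁻¹)^2),
      abs_of_nonneg (by positivity : (0:ℝ) ≤ (1+x^2)⁻¹), e]
    apply inv_anti₀ h2
    nlinarith [abs_nonneg x, sq_abs x]

noncomputable def Gmaj (k : ℝ) : ℝ := 8 * vfun (k+1) + 8 * (1+|k|)⁻¹ + 8 * vfun (k-1)

lemma Gmaj_nonneg (k : ℝ) : 0 ≤ Gmaj k := by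
  unfold Gmaj
  have := vfun_nonneg (k+1); have := vfun_nonneg (k-1)
  have : (0:ℝ) ≤ (1+|k|)⁻¹ := by positivity
  positivity

lemma Gmaj_memLp : MemLp Gmaj 2 volume := by
  have h1 : MemLp (fun k : ℝ => 8 * vfun (k+1)) 2 volume := (vfun_memLp2 1).const_mul 8
  have h2 : MemLp (fun k : ℝ => 8 * (1+|k|)⁻¹) 2 volume := mid_memLp.const_mul 8
  have h3 : MemLp (fun k : ℝ => 8 * vfun (k-1)) 2 volume := by
    have := (vfun_memLp2 (-1)).const_mul 8
    simpa [sub_eq_add_neg] using this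
  exact (h1.add h2).add h3

/-- L² estimate for the Cauchy transform over the rectangular contour
`S₁ = [−1, −1+i, 1+i, 1]`, written out by parametrizing the three sides:
there is a universal constant `C > 0` such that for bounded densities
(`|f₁| ≤ M` a.e. on `[−1,1]`, `|f₂|, |f₃| ≤ M` a.e. on `[0,1]`) the function
`F(k) = i∫₀¹ f₂(y)/((−1+iy) − k) dy + ∫_{−1}^{1} f₁(s)/((s+i) − k) ds
          − i∫₀¹ f₃(y)/((1+iy) − k) dy`
is in `L²(ℝ)` with `‖F‖_{L²} ≤ C·M`. -/
theorem stmt11 :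
    ∃ C : ℝ, 0 < C ∧
      ∀ (M : ℝ), 0 ≤ M →
      ∀ f₁ : ℝ → ℂ, Measurable f₁ →
        (∀ᵐ s ∂(volume.restrict (Set.Icc (-1 : ℝ) 1)), ‖f₁ s‖ ≤ M) →
      ∀ f₂ : ℝ → ℂ, Measurable f₂ →
        (∀ᵐ y ∂(volume.restrict (Set.Icc (0 : ℝ) 1)), ‖f₂ y‖ ≤ M) →
      ∀ f₃ : ℝ → ℂ, Measurable f₃ →
        (∀ᵐ y ∂(volume.restrict (Set.Icc (0 : ℝ) 1)), ‖f₃ y‖ ≤ M) →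
        MemLp (fun k : ℝ =>
            Complex.I * (∫ y in Set.Icc (0 : ℝ) 1, f₂ y / ((-1 + Complex.I * y) - k)) +
            (∫ s in Set.Icc (-1 : ℝ) 1, f₁ s / ((s + Complex.I) - k)) -
            Complex.I * (∫ y in Set.Icc (0 : ℝ) 1, f₃ y / ((1 + Complex.I * y) - k)))
          2 (volume : Measure ℝ) ∧
        eLpNorm (fun k : ℝ =>
            Complex.I * (∫ y in Set.Icc (0 : ℝ) 1, f₂ y / ((-1 + Complex.I * y) - k)) +
            (∫ s in Set.Icc (-1 : ℝ) 1, f₁ s / ((s + Complex.I) - k)) -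
            Complex.I * (∫ y in Set.Icc (0 : ℝ) 1, f₃ y / ((1 + Complex.I * y) - k)))
          2 (volume : Measure ℝ) ≤ ENNReal.ofReal (C * M) := by
  set C₀ : ℝ := (eLpNorm Gmaj 2 volume).toReal with hC₀
  have hC₀nn : 0 ≤ C₀ := ENNReal.toReal_nonneg
  refine ⟨C₀ + 1, by positivity, ?_⟩
  intro M hM f₁ hf₁ hbd₁ f₂ hf₂ hbd₂ f₃ hf₃ hbd₃
  set F : ℝ → ℂ := fun k : ℝ =>
      Complex.I * (∫ y in Set.Icc (0 : ℝ) 1, f₂ y / ((-1 + Complex.I * y) - k)) +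
      (∫ s in Set.Icc (-1 : ℝ) 1, f₁ s / ((s + Complex.I) - k)) -
      Complex.I * (∫ y in Set.Icc (0 : ℝ) 1, f₃ y / ((1 + Complex.I * y) - k)) with hF
  -- measurability
  have hA : AEStronglyMeasurable
      (fun k : ℝ => ∫ y in Set.Icc (0:ℝ) 1, f₂ y / ((-1 + Complex.I * y) - k)) volume :=
    (StronglyMeasurable.integral_prod_right'
      (f := fun p : ℝ × ℝ => f₂ p.2 / ((-1 + Complex.I * p.2) - p.1))
      (Measurable.stronglyMeasurable (by fun_prop))).aestronglyMeasurable
  have hB : AEStronglyMeasurable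
      (fun k : ℝ => ∫ s in Set.Icc (-1:ℝ) 1, f₁ s / ((s + Complex.I) - k)) volume :=
    (StronglyMeasurable.integral_prod_right'
      (f := fun p : ℝ × ℝ => f₁ p.2 / ((p.2 + Complex.I) - p.1))
      (Measurable.stronglyMeasurable (by fun_prop))).aestronglyMeasurable
  have hCm : AEStronglyMeasurable
      (fun k : ℝ => ∫ y in Set.Icc (0:ℝ) 1, f₃ y / ((1 + Complex.I * y) - k)) volume :=
    (StronglyMeasurable.integral_prod_right'
      (f := fun p : ℝ × ℝ => f₃ p.2 / ((1 + Complex.I * p.2) - p.1))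
      (Measurable.stronglyMeasurable (by fun_prop))).aestronglyMeasurable
  have hFm : AEStronglyMeasurable F volume := by
    rw [hF]
    exact ((hA.const_smul' Complex.I).add hB).sub (hCm.const_smul' Complex.I)
  -- pointwise bound
  have hne : ∀ᵐ k : ℝ ∂volume, k ≠ (-1:ℝ) ∧ k ≠ (1:ℝ) := by
    have e1 : ∀ᵐ k : ℝ ∂volume, k ≠ (-1:ℝ) := by
      refine MeasureTheory.ae_iff.2 ?_
      have hs : {a : ℝ | ¬ a ≠ -1} = {(-1:ℝ)} := by ext z; simp
      rw [hs]; exact measure_singleton _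
    have e2 : ∀ᵐ k : ℝ ∂volume, k ≠ (1:ℝ) := by
      refine MeasureTheory.ae_iff.2 ?_
      have hs : {a : ℝ | ¬ a ≠ 1} = {(1:ℝ)} := by ext z; simp
      rw [hs]; exact measure_singleton _
    filter_upwards [e1, e2] with k h1 h2 using ⟨h1, h2⟩
  have hFbound : ∀ᵐ k : ℝ ∂volume, ‖F k‖ ≤ M * Gmaj k := by
    filter_upwards [hne] with k hk
    have hk1 : k ≠ (-1:ℝ) := hk.1
    have hk2 : k ≠ (1:ℝ) := hk.2
    have b2 : ‖∫ y in Set.Icc (0:ℝ) 1, f₂ y / ((-1 + Complex.I * y) - k)‖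
        ≤ M * (8 * vfun (k+1)) := by
      have := vert_bound hM hbd₂ (-1) k hk1
      simp only [Complex.ofReal_neg, Complex.ofReal_one, sub_neg_eq_add] at this
      convert this using 3 <;> norm_num
    have b3 : ‖∫ y in Set.Icc (0:ℝ) 1, f₃ y / ((1 + Complex.I * y) - k)‖
        ≤ M * (8 * vfun (k-1)) := by
      have := vert_bound hM hbd₃ 1 k hk2
      simpa using this
    have b1 : ‖∫ s in Set.Icc (-1:ℝ) 1, f₁ s / ((s + Complex.I) - k)‖
        ≤ M * (8 * (1+|k|)⁻¹) := top_bound hM hbd₁ k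
    rw [hF]
    calc ‖Complex.I * (∫ y in Set.Icc (0 : ℝ) 1, f₂ y / ((-1 + Complex.I * y) - k)) +
            (∫ s in Set.Icc (-1 : ℝ) 1, f₁ s / ((s + Complex.I) - k)) -
            Complex.I * (∫ y in Set.Icc (0 : ℝ) 1, f₃ y / ((1 + Complex.I * y) - k))‖
        ≤ ‖Complex.I * (∫ y in Set.Icc (0 : ℝ) 1, f₂ y / ((-1 + Complex.I * y) - k)) +
            (∫ s in Set.Icc (-1 : ℝ) 1, f₁ s / ((s + Complex.I) - k))‖ +
          ‖Complex.I * (∫ y in Set.Icc (0 : ℝ) 1, f₃ y / ((1 + Complex.I * y) - k))‖ :=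
          norm_sub_le _ _
      _ ≤ (‖Complex.I * (∫ y in Set.Icc (0 : ℝ) 1, f₂ y / ((-1 + Complex.I * y) - k))‖ +
          ‖∫ s in Set.Icc (-1 : ℝ) 1, f₁ s / ((s + Complex.I) - k)‖) +
          ‖Complex.I * (∫ y in Set.Icc (0 : ℝ) 1, f₃ y / ((1 + Complex.I * y) - k))‖ := by
          gcongr
          exact norm_add_le _ _
      _ = ‖∫ y in Set.Icc (0 : ℝ) 1, f₂ y / ((-1 + Complex.I * y) - k)‖ +
          ‖∫ s in Set.Icc (-1 : ℝ) 1, f₁ s / ((s + Complex.I) - k)‖ +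
          ‖∫ y in Set.Icc (0 : ℝ) 1, f₃ y / ((1 + Complex.I * y) - k)‖ := by
          rw [norm_mul, norm_mul, Complex.norm_I, one_mul, one_mul]
      _ ≤ M * (8 * vfun (k+1)) + M * (8 * (1+|k|)⁻¹) + M * (8 * vfun (k-1)) := by
          gcongr
      _ = M * Gmaj k := by unfold Gmaj; ring
  have hGM : MemLp (fun k : ℝ => M * Gmaj k) 2 volume := Gmaj_memLp.const_mul M
  have hFb' : ∀ᵐ k : ℝ ∂volume, ‖F k‖ ≤ ‖M * Gmaj k‖ := by
    filter_upwards [hFbound] with k h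
    exact h.trans (le_abs_self _)
  have hFmem : MemLp F 2 volume := MemLp.of_le hGM hFm hFb'
  refine ⟨hFmem, ?_⟩
  have step1 : eLpNorm F 2 volume ≤ eLpNorm (fun k : ℝ => M * Gmaj k) 2 volume :=
    eLpNorm_mono_ae hFb'
  have step2 : eLpNorm (fun k : ℝ => M * Gmaj k) 2 volume
      = (‖M‖₊ : ENNReal) * eLpNorm Gmaj 2 volume := by
    exact eLpNorm_const_smul M Gmaj 2 (volume : Measure ℝ)
  have hfin : eLpNorm Gmaj 2 volume ≠ ⊤ := Gmaj_memLp.2.ne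
  calc eLpNorm F 2 volume ≤ (‖M‖₊ : ENNReal) * eLpNorm Gmaj 2 volume := step1.trans step2.le
    _ = ENNReal.ofReal M * ENNReal.ofReal C₀ := by
        rw [show ((‖M‖₊ : ENNReal)) = ‖M‖ₑ from rfl, Real.enorm_eq_ofReal hM, hC₀, ENNReal.ofReal_toReal hfin]
    _ = ENNReal.ofReal (M * C₀) := (ENNReal.ofReal_mul hM).symm
    _ ≤ ENNReal.ofReal ((C₀ + 1) * M) := ENNReal.ofReal_le_ofReal (by nlinarith)
end
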